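/- arXiv:0904.2634 — 2 statements merged into one kernel-verified Lean document; each statement's English description precedes it below -/
import Mathlib

section
/- Let p̄, r̄, s̄ ∈ R^n have positive entries with p̄ strictly increasing and p̄·x* − s̄ = r̄ for a real x*. Let (x̂, b̂) minimize ‖p̄·x − b·e − r̄‖² where e = (1,...,1)ᵀ. Then x̂ = x* + (‖p̄‖₁·(∑ s̄_i) − n·(p̄ᵀs̄)) / (n‖p̄‖² − ‖p̄‖₁²). In particular x̂ > x* if s̄ is non-constant nonincreasing, x̂ < x* if s̄ is non-constant nondecreasing, and x̂ = x* if s̄ is constant. -/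
/-!
Minimality of `(x̂, b̂)` forces the residual to be orthogonal to `p̄` and to `e`; these normal
equations give the usual slope formula `x̂ = (n ∑ pᵢrᵢ - ∑ pᵢ ∑ rᵢ) / (n ∑ pᵢ² - (∑ pᵢ)²)`, and
substituting `r̄ = p̄ x* - s̄` turns it into the stated formula. Both the denominator and the
numerator are Chebyshev sums `n ∑ fᵢgᵢ - ∑ fᵢ ∑ gᵢ = ½ ∑ᵢⱼ (fⱼ - fᵢ)(gⱼ - gᵢ)`, whose sign is
strict as soon as one pair of terms `(fⱼ - fᵢ)(gⱼ - gᵢ)` is nonzero.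
-/

open Finset

section Chebyshev

variable {ι R : Type*} [Fintype ι] [CommRing R]

theorem two_mul_card_mul_sum_mul_sub_sum_mul_sum (f g : ι → R) :
    2 * (Fintype.card ι * ∑ i, f i * g i - (∑ i, f i) * ∑ i, g i) =
      ∑ i, ∑ j, (f j - f i) * (g j - g i) := by
  simp only [sub_mul, mul_sub, sum_sub_distrib, sum_const, card_univ,
    nsmul_eq_mul, ← mul_sum, ← sum_mul]
  ring

variable [LinearOrder R] [IsStrictOrderedRing R] {f g : ι → R}

theorem Monovary.sum_mul_sum_lt_card_mul_sum (hfg : Monovary f g)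
    (h : ∃ i j, f i ≠ f j ∧ g i ≠ g j) :
    (∑ i, f i) * ∑ i, g i < Fintype.card ι * ∑ i, f i * g i := by
  obtain ⟨i, j, hf, hg⟩ := h
  have hpos : 0 < ∑ i, ∑ j, (f j - f i) * (g j - g i) := by
    rw [← Fintype.sum_prod_type']
    refine sum_pos' (fun x _ => hfg.sub_mul_sub_nonneg x.1 x.2) ⟨(i, j), mem_univ _, ?_⟩
    exact (hfg.sub_mul_sub_nonneg i j).lt_of_ne
      (mul_ne_zero (sub_ne_zero.2 hf.symm) (sub_ne_zero.2 hg.symm)).symm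
  linarith [two_mul_card_mul_sum_mul_sub_sum_mul_sum f g]

theorem Antivary.card_mul_sum_lt_sum_mul_sum (hfg : Antivary f g)
    (h : ∃ i j, f i ≠ f j ∧ g i ≠ g j) :
    Fintype.card ι * ∑ i, f i * g i < (∑ i, f i) * ∑ i, g i := by
  obtain ⟨i, j, hf, hg⟩ := h
  have hneg : ∑ i, ∑ j, (f j - f i) * (g j - g i) < 0 := by
    rw [← Fintype.sum_prod_type']
    refine sum_neg' (fun x _ => hfg.sub_mul_sub_nonpos x.1 x.2) ⟨(i, j), mem_univ _, ?_⟩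
    exact (hfg.sub_mul_sub_nonpos i j).lt_of_ne
      (mul_ne_zero (sub_ne_zero.2 hf.symm) (sub_ne_zero.2 hg.symm))
  linarith [two_mul_card_mul_sum_mul_sub_sum_mul_sum f g]

theorem sq_sum_lt_card_mul_sum_sq (h : ∃ i j, f i ≠ f j) :
    (∑ i, f i) ^ 2 < Fintype.card ι * ∑ i, f i ^ 2 := by
  obtain ⟨i, j, hij⟩ := h
  simpa only [← pow_two] using (monovary_self f).sum_mul_sum_lt_card_mul_sum ⟨i, j, hij, hij⟩

end Chebyshev

theorem sum_mul_eq_zero_of_forall_sum_sq_le {ι K : Type*} [Fintype ι] [Field K] [LinearOrder K]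
    [IsStrictOrderedRing K] {u v : ι → K}
    (h : ∀ t : K, ∑ i, u i ^ 2 ≤ ∑ i, (u i + t * v i) ^ 2) : ∑ i, u i * v i = 0 := by
  have hdiscrim : discrim (∑ i, v i ^ 2) (2 * ∑ i, u i * v i) 0 ≤ 0 := by
    refine discrim_le_zero fun t => ?_
    have hexpand : ∑ i, (u i + t * v i) ^ 2 =
        ∑ i, u i ^ 2 + ((∑ i, v i ^ 2) * (t * t) + 2 * (∑ i, u i * v i) * t) := by
      simp only [mul_sum, sum_mul, ← sum_add_distrib]
      exact sum_congr rfl fun i _ => by ring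
    linarith [h t]
  rw [discrim] at hdiscrim
  nlinarith [sq_nonneg (∑ i, u i * v i)]

def IsLeastSquaresFit {ι : Type*} [Fintype ι] (p r : ι → ℝ) (x b : ℝ) : Prop :=
  ∀ x' b' : ℝ, ∑ i, (x * p i - b - r i) ^ 2 ≤ ∑ i, (x' * p i - b' - r i) ^ 2

namespace IsLeastSquaresFit

variable {ι : Type*} [Fintype ι] {p r : ι → ℝ} {x b : ℝ}

theorem normal_equations (h : IsLeastSquaresFit p r x b) :
    x * ∑ i, p i ^ 2 - b * ∑ i, p i = ∑ i, p i * r i ∧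
      x * ∑ i, p i - Fintype.card ι * b = ∑ i, r i := by
  have hx : ∑ i, (x * p i - b - r i) * p i = 0 :=
    sum_mul_eq_zero_of_forall_sum_sq_le fun t =>
      (h (x + t) b).trans_eq (sum_congr rfl fun i _ => by ring)
  have hb : ∑ i, (x * p i - b - r i) * 1 = 0 :=
    sum_mul_eq_zero_of_forall_sum_sq_le fun t =>
      (h x (b - t)).trans_eq (sum_congr rfl fun i _ => by ring)
  simp only [sub_mul, mul_one, mul_assoc, ← pow_two, mul_comm (r _) (p _), sum_sub_distrib,
    sum_const, card_univ, nsmul_eq_mul, ← mul_sum] at hx hb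
  constructor
  · linear_combination hx
  · linear_combination hb

theorem slope_eq (h : IsLeastSquaresFit p r x b)
    (hD : (Fintype.card ι : ℝ) * ∑ i, p i ^ 2 - (∑ i, p i) ^ 2 ≠ 0) :
    x = (Fintype.card ι * ∑ i, p i * r i - (∑ i, p i) * ∑ i, r i) /
      (Fintype.card ι * ∑ i, p i ^ 2 - (∑ i, p i) ^ 2) := by
  obtain ⟨h₁, h₂⟩ := h.normal_equations
  rw [eq_div_iff hD]
  linear_combination (Fintype.card ι : ℝ) * h₁ - (∑ i, p i) * h₂

theorem slope_eq_add (h : IsLeastSquaresFit p r x b) {x₀ : ℝ} {s : ι → ℝ}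
    (hr : ∀ i, p i * x₀ - s i = r i)
    (hD : (Fintype.card ι : ℝ) * ∑ i, p i ^ 2 - (∑ i, p i) ^ 2 ≠ 0) :
    x = x₀ + ((∑ i, p i) * (∑ i, s i) - Fintype.card ι * ∑ i, p i * s i) /
      (Fintype.card ι * ∑ i, p i ^ 2 - (∑ i, p i) ^ 2) := by
  have hnum : Fintype.card ι * ∑ i, p i * r i - (∑ i, p i) * ∑ i, r i =
      x₀ * (Fintype.card ι * ∑ i, p i ^ 2 - (∑ i, p i) ^ 2) +
        ((∑ i, p i) * (∑ i, s i) - Fintype.card ι * ∑ i, p i * s i) := by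
    simp only [← hr, mul_sub, ← mul_assoc, ← pow_two, sum_sub_distrib, ← sum_mul]
    ring
  rw [h.slope_eq hD, hnum, add_div, mul_div_cancel_right₀ _ hD]

end IsLeastSquaresFit

theorem cor_logan_item1_general (n : ℕ) (hn : 2 ≤ n) (p r s : Fin n → ℝ)
    (hpm : StrictMono p)
    (xstar : ℝ) (hexact : ∀ i, p i * xstar - s i = r i)
    (xh bh : ℝ)
    (hmin : ∀ x b : ℝ,
      ∑ i, (xh * p i - bh - r i) ^ 2 ≤ ∑ i, (x * p i - b - r i) ^ 2) :
    xh = xstar +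
        ((∑ i, p i) * (∑ i, s i) - n * ∑ i, p i * s i) /
          (n * ∑ i, p i ^ 2 - (∑ i, p i) ^ 2) ∧
      ((Antitone s ∧ (∃ i j, s i ≠ s j)) → xh > xstar) ∧
      ((Monotone s ∧ (∃ i j, s i ≠ s j)) → xh < xstar) ∧
      ((∃ c : ℝ, ∀ i, s i = c) → xh = xstar) := by
  have hD : 0 < (n : ℝ) * ∑ i, p i ^ 2 - (∑ i, p i) ^ 2 := by
    have h01 : (⟨0, by omega⟩ : Fin n) < ⟨1, by omega⟩ := Fin.mk_lt_mk.2 one_pos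
    have := sq_sum_lt_card_mul_sum_sq ⟨_, _, (hpm h01).ne⟩
    rw [Fintype.card_fin] at this
    linarith
  have hslope := IsLeastSquaresFit.slope_eq_add hmin hexact (by simpa using hD.ne')
  rw [Fintype.card_fin] at hslope
  have hne {i j : Fin n} (h : s i ≠ s j) : p i ≠ p j ∧ s i ≠ s j :=
    ⟨hpm.injective.ne (ne_of_apply_ne s h), h⟩
  refine ⟨hslope, ?_, ?_, ?_⟩
  · rintro ⟨hanti, i, j, hs⟩
    have := (hpm.monotone.antivary hanti).card_mul_sum_lt_sum_mul_sum ⟨i, j, hne hs⟩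
    rw [Fintype.card_fin] at this
    rw [hslope, gt_iff_lt, lt_add_iff_pos_right]
    exact div_pos (by linarith) hD
  · rintro ⟨hmono, i, j, hs⟩
    have := (hpm.monotone.monovary hmono).sum_mul_sum_lt_card_mul_sum ⟨i, j, hne hs⟩
    rw [Fintype.card_fin] at this
    rw [hslope, add_lt_iff_neg_left]
    exact div_neg_of_neg_of_pos (by linarith) hD
  · rintro ⟨c, hc⟩
    rw [hslope, funext hc]
    simp only [sum_const, card_univ, Fintype.card_fin, nsmul_eq_mul, ← sum_mul]
    ring

theorem cor_logan_item1 (n : ℕ) (hn : 2 ≤ n) (p r s : Fin n → ℝ)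
    (hp : ∀ i, 0 < p i) (hr : ∀ i, 0 < r i) (hs : ∀ i, 0 < s i)
    (hpm : StrictMono p)
    (xstar : ℝ) (hexact : ∀ i, p i * xstar - s i = r i)
    (xh bh : ℝ)
    (hmin : ∀ x b : ℝ,
      ∑ i, (xh * p i - bh - r i) ^ 2 ≤ ∑ i, (x * p i - b - r i) ^ 2) :
    xh = xstar +
        ((∑ i, p i) * (∑ i, s i) - n * ∑ i, p i * s i) /
          (n * ∑ i, p i ^ 2 - (∑ i, p i) ^ 2) ∧
      ((Antitone s ∧ (∃ i j, s i ≠ s j)) → xh > xstar) ∧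
      ((Monotone s ∧ (∃ i j, s i ≠ s j)) → xh < xstar) ∧
      ((∃ c : ℝ, ∀ i, s i = c) → xh = xstar) :=
  cor_logan_item1_general n hn p r s hpm xstar hexact xh bh hmin
end

section
/- Let p̄, r̄, s̄ ∈ R^n have positive entries with p̄ non-constant, and suppose p̄·x* − s̄ = r̄. If (x̂, b̂) minimizes ‖p̄·x − b·e − r̄‖², then |x̂ − x*| ≤ n‖p̄‖₁ / (n‖p̄‖² − ‖p̄‖₁²) · V(s̄), where V(s̄) = max_i s̄_i − min_i s̄_i. -/
/-!
Perturbing the minimiser in x and in b gives the two normal equations of the least-squares fit;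
eliminating b̂ and substituting r̄ = p̄ x* − s̄ yields
(x̂ − x*)(n‖p̄‖² − ‖p̄‖₁²) = −(n⟨p̄, s̄⟩ − ‖p̄‖₁‖s̄‖₁) = −∑ᵢ∑ⱼ pᵢ (sᵢ − sⱼ).
Each |sᵢ − sⱼ| is at most V(s̄), and n‖p̄‖² − ‖p̄‖₁² = ½ ∑ᵢ∑ⱼ (pᵢ − pⱼ)² is positive since p̄ is
non-constant.
-/

open Finset

section
variable {ι : Type*} [Fintype ι]

lemma sum_mul_eq_zero_of_forall_sum_sq_le_s12 (a c : ι → ℝ)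
    (h : ∀ t : ℝ, ∑ i, a i ^ 2 ≤ ∑ i, (a i + t * c i) ^ 2) : ∑ i, a i * c i = 0 := by
  have hquad : ∀ t : ℝ, 0 ≤ (∑ i, c i ^ 2) * (t * t) + (2 * ∑ i, a i * c i) * t + 0 := by
    intro t
    have hexpand : ∑ i, (a i + t * c i) ^ 2
        = ∑ i, a i ^ 2 + ((∑ i, c i ^ 2) * (t * t) + (2 * ∑ i, a i * c i) * t) := by
      simp only [mul_sum, sum_mul, ← sum_add_distrib]
      exact sum_congr rfl fun i _ => by ring
    linarith [h t]
  have hdisc := discrim_le_zero hquad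
  rw [discrim] at hdisc
  nlinarith [sq_nonneg (∑ i, a i * c i)]

lemma card_mul_sum_mul_sub_sum_mul_sum (u v : ι → ℝ) :
    Fintype.card ι * ∑ i, u i * v i - (∑ i, u i) * ∑ i, v i
      = ∑ i, ∑ j, u i * (v i - v j) := by
  simp only [mul_sub, sum_sub_distrib, sum_const, card_univ, nsmul_eq_mul, ← mul_sum, ← sum_mul]

lemma two_mul_sum_sum_mul_sub_self (u : ι → ℝ) :
    2 * ∑ i, ∑ j, u i * (u i - u j) = ∑ i, ∑ j, (u i - u j) ^ 2 := by
  have hswap : ∑ i, ∑ j, u i * (u i - u j) = ∑ i, ∑ j, u j * (u j - u i) := sum_comm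
  rw [two_mul]
  nth_rw 2 [hswap]
  simp only [← sum_add_distrib]
  exact sum_congr rfl fun i _ => sum_congr rfl fun j _ => by ring

lemma card_mul_sum_sq_sub_sq_sum_pos {u : ι → ℝ} (hu : ∃ i j, u i ≠ u j) :
    0 < Fintype.card ι * ∑ i, u i ^ 2 - (∑ i, u i) ^ 2 := by
  obtain ⟨i, j, hij⟩ := hu
  have hpos : 0 < ∑ i, ∑ j, (u i - u j) ^ 2 :=
    sum_pos' (fun _ _ => sum_nonneg fun _ _ => sq_nonneg _) ⟨i, mem_univ _,
      sum_pos' (fun _ _ => sq_nonneg _) ⟨j, mem_univ _, by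
        have := sub_ne_zero.mpr hij; positivity⟩⟩
  have hdouble := card_mul_sum_mul_sub_sum_mul_sum u u
  simp only [← sq] at hdouble
  rw [hdouble]
  linarith [two_mul_sum_sum_mul_sub_self u]

lemma abs_sub_le_sSup_sub_sInf_range (s : ι → ℝ) (i j : ι) :
    |s i - s j| ≤ sSup (Set.range s) - sInf (Set.range s) := by
  have hsup k : s k ≤ sSup (Set.range s) := le_csSup (Set.finite_range s).bddAbove ⟨k, rfl⟩
  have hinf k : sInf (Set.range s) ≤ s k := csInf_le (Set.finite_range s).bddBelow ⟨k, rfl⟩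
  rw [abs_sub_le_iff]
  constructor <;> linarith [hsup i, hsup j, hinf i, hinf j]

lemma abs_card_mul_sum_mul_sub_sum_mul_sum_le {p s : ι → ℝ} (hp : ∀ i, 0 ≤ p i) {V : ℝ}
    (hV : ∀ i j, |s i - s j| ≤ V) :
    |Fintype.card ι * ∑ i, p i * s i - (∑ i, p i) * ∑ i, s i|
      ≤ Fintype.card ι * (∑ i, p i) * V := by
  rw [card_mul_sum_mul_sub_sum_mul_sum]
  calc |∑ i, ∑ j, p i * (s i - s j)| ≤ ∑ i, ∑ j, |p i * (s i - s j)| :=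
        (abs_sum_le_sum_abs _ _).trans (sum_le_sum fun i _ => abs_sum_le_sum_abs _ _)
    _ ≤ ∑ i : ι, ∑ j : ι, p i * V := by
        gcongr with i _ j _
        rw [abs_mul, abs_of_nonneg (hp i)]
        exact mul_le_mul_of_nonneg_left (hV i j) (hp i)
    _ = Fintype.card ι * (∑ i, p i) * V := by
        simp only [sum_const, card_univ, nsmul_eq_mul, ← mul_sum, ← sum_mul]; ring

lemma leastSquares_slope_mul_eq (p y : ι → ℝ) (x b : ℝ)
    (hmin : ∀ x' b' : ℝ, ∑ i, (x * p i - b - y i) ^ 2 ≤ ∑ i, (x' * p i - b' - y i) ^ 2) :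
    x * (Fintype.card ι * ∑ i, p i ^ 2 - (∑ i, p i) ^ 2)
      = Fintype.card ι * ∑ i, p i * y i - (∑ i, p i) * ∑ i, y i := by
  have hslope : ∑ i, (x * p i - b - y i) * p i = 0 :=
    sum_mul_eq_zero_of_forall_sum_sq_le_s12 _ _ fun t => by
      simpa only [add_mul, add_sub_right_comm] using hmin (x + t) b
  have hintercept : ∑ i, (x * p i - b - y i) * 1 = 0 :=
    sum_mul_eq_zero_of_forall_sum_sq_le_s12 _ _ fun t => by
      convert hmin x (b - t) using 3; ring
  have hslope_eq : ∑ i, (x * p i - b - y i) * p i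
      = x * ∑ i, p i ^ 2 - b * ∑ i, p i - ∑ i, p i * y i := by
    simp only [mul_sum, ← sum_sub_distrib]
    exact sum_congr rfl fun i _ => by ring
  have hintercept_eq : ∑ i, (x * p i - b - y i) * 1
      = x * ∑ i, p i - Fintype.card ι * b - ∑ i, y i := by
    simp only [mul_one, sum_sub_distrib, ← mul_sum, sum_const, card_univ, nsmul_eq_mul]
  rw [hslope_eq] at hslope
  rw [hintercept_eq] at hintercept
  linear_combination (Fintype.card ι : ℝ) * hslope - (∑ i, p i) * hintercept
end

theorem cor_logan_item1_bound_general (n : ℕ) (p r s : Fin n → ℝ)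
    (hp : ∀ i, 0 < p i)
    (hpnonconst : ∃ i j, p i ≠ p j)
    (xstar : ℝ) (hexact : ∀ i, p i * xstar - s i = r i)
    (xh bh : ℝ)
    (hmin : ∀ x b : ℝ,
      ∑ i, (xh * p i - bh - r i) ^ 2 ≤ ∑ i, (x * p i - b - r i) ^ 2) :
    |xh - xstar| ≤
      n * (∑ i, p i) / (n * ∑ i, p i ^ 2 - (∑ i, p i) ^ 2) *
        (sSup (Set.range s) - sInf (Set.range s)) := by
  have hD := card_mul_sum_sq_sub_sq_sum_pos hpnonconst
  have hslope := leastSquares_slope_mul_eq p r xh bh hmin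
  simp only [Fintype.card_fin] at hD hslope
  have hsum_pr : ∑ i, p i * r i = xstar * ∑ i, p i ^ 2 - ∑ i, p i * s i := by
    simp only [← hexact, mul_sum, ← sum_sub_distrib]
    exact sum_congr rfl fun i _ => by ring
  have hsum_r : ∑ i, r i = xstar * ∑ i, p i - ∑ i, s i := by
    simp only [← hexact, mul_sum, ← sum_sub_distrib]
    exact sum_congr rfl fun i _ => by ring
  rw [hsum_pr, hsum_r] at hslope
  have herror : (xh - xstar) * (n * ∑ i, p i ^ 2 - (∑ i, p i) ^ 2)
      = -(n * ∑ i, p i * s i - (∑ i, p i) * ∑ i, s i) := by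
    linear_combination hslope
  have hbound := abs_card_mul_sum_mul_sub_sum_mul_sum_le (fun i => (hp i).le)
    (abs_sub_le_sSup_sub_sInf_range s)
  rw [Fintype.card_fin, ← abs_neg, ← herror, abs_mul, abs_of_pos hD] at hbound
  rwa [div_mul_eq_mul_div, le_div_iff₀ hD]

theorem cor_logan_item1_bound (n : ℕ) (hn : 0 < n) (p r s : Fin n → ℝ)
    (hp : ∀ i, 0 < p i) (hr : ∀ i, 0 < r i) (hs : ∀ i, 0 < s i)
    (hpnonconst : ∃ i j, p i ≠ p j)
    (xstar : ℝ) (hexact : ∀ i, p i * xstar - s i = r i)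
    (xh bh : ℝ)
    (hmin : ∀ x b : ℝ,
      ∑ i, (xh * p i - bh - r i) ^ 2 ≤ ∑ i, (x * p i - b - r i) ^ 2) :
    |xh - xstar| ≤
      n * (∑ i, p i) / (n * ∑ i, p i ^ 2 - (∑ i, p i) ^ 2) *
        (sSup (Set.range s) - sInf (Set.range s)) :=
  cor_logan_item1_bound_general n p r s hp hpnonconst xstar hexact xh bh hmin
end
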